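/- arXiv:1906.01433 — 2 statements merged into one kernel-verified Lean document; each statement's English description precedes it below -/
import Mathlib

section
/- Let [N] be partitioned into J₀, J₂, J₃, let D = ∑_{j∈J₀} d_j for fixed constants d_j ≥ 0 (j ∈ J₀), and let x be chosen uniformly at random from the set of sequences in [N]^{2M} with d_x(j) ≥ i for all j ∈ J_i (i = 2, 3) and d_x(j) = d_j for all j ∈ J₀. Let λ > 0 satisfy ∑_{i=2}^{3} (λ f_{i−1}(λ)/f_i(λ)) |J_i| = 2M − D. For j ∈ J_i (i = 2, 3) let Z_j be independent truncated Poisson random variables with parameter λ truncated at i, and for j ∈ J₀ set Z_j = d_j. Then the joint distribution of the degree sequence (d_x(j))_{j∈[N]} equals the joint distribution of (Z_j)_{j∈[N]} conditioned on the event ∑_{j∈[N]} Z_j = 2M. -/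
open scoped BigOperators

/-- `f k lam = e^lam - ∑_{i<k} lam^i / i!`. -/
noncomputable def truncF (k : ℕ) (lam : ℝ) : ℝ :=
  Real.exp lam - ∑ i ∈ Finset.range k, lam ^ i / (Nat.factorial i : ℝ)

/-- The probability mass function of a Poisson random variable with parameter `lam`
truncated at `ℓ` (i.e. conditioned on being at least `ℓ`). -/
noncomputable def truncPoissonPMF (lam : ℝ) (ℓ : ℕ) (t : ℕ) : ℝ :=
  if ℓ ≤ t then lam ^ t / ((Nat.factorial t : ℝ) * truncF ℓ lam) else 0

/-- The degree `d_x(v)` of `v` in the multigraph `G_x`: the number of indices `j` with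
`x_j = v`. -/
def seqDeg {N M : ℕ} (x : Fin M → Fin N) (v : Fin N) : ℕ :=
  (Finset.univ.filter fun i => x i = v).card

/-- The probability mass function of the variable `Z_j`: truncated Poisson (truncated at 2
resp. 3) for `j ∈ J₂` resp. `j ∈ J₃`, and the constant `d₀ j` for `j ∈ J₀`. -/
noncomputable def pmfZ {N : ℕ} (J₂ J₃ : Finset (Fin N)) (d₀ : Fin N → ℕ) (lam : ℝ)
    (j : Fin N) (t : ℕ) : ℝ :=
  if j ∈ J₂ then truncPoissonPMF lam 2 t
  else if j ∈ J₃ then truncPoissonPMF lam 3 t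
  else if t = d₀ j then 1 else 0

/-!
A sequence `x ∈ [N]^m` with degree sequence `e` amounts to distributing the `m` positions among
the vertices, `e j` of them to `j`, so there are `m! / ∏ e_j!` such sequences when `∑ e_j = m`.
On the other side, `pmfZ j t = c_j · λ^t / t!` on the allowed degrees `t` of `j` (and `0`
elsewhere) with constants `c_j ≠ 0`, so on `∑ e_j = m` the product `∏ pmfZ j (e j)` is
`λ^m ∏ c_j / ∏ e_j!` times the indicator that `e` is allowed. Both sides are therefore
proportional, with a factor independent of `e`, and normalising removes the factor.
-/

open Finset Nat

namespace Equiv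

def sigmaOverEquivPiFiber {α β : Type*} (γ : β → Type*) (x : α → β) :
    {e : α ≃ Σ v, γ v // ∀ i, (e i).1 = x i} ≃ ∀ v, ({i // x i = v} ≃ γ v) where
  toFun e v := (e.1.subtypeEquiv fun i => by rw [e.2 i]).trans (sigmaSubtype v)
  invFun g := ⟨(sigmaFiberEquiv x).symm.trans (sigmaCongrRight g), fun _ => rfl⟩
  left_inv := by
    rintro ⟨e, he⟩
    ext i : 2
    exact congrArg Subtype.val ((sigmaSubtype (x i)).symm_apply_apply ⟨e i, he i⟩)
  right_inv g := by
    funext v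
    ext ⟨i, rfl⟩
    rfl

end Equiv

theorem Fintype.card_equiv_eq_ite (α γ : Type*) [Fintype α] [DecidableEq α] [Fintype γ]
    [DecidableEq γ] :
    Fintype.card (α ≃ γ) = if Fintype.card α = Fintype.card γ then (Fintype.card α)! else 0 := by
  split_ifs with h
  · exact Fintype.card_equiv (Fintype.equivOfCardEq h)
  · have : IsEmpty (α ≃ γ) := ⟨fun e => h (Fintype.card_congr e)⟩
    exact Fintype.card_eq_zero

section FibreCounting

variable {α β : Type*} [Fintype α] [DecidableEq α] [Fintype β] [DecidableEq β]

/-- Count the bijections `α ≃ Σ v, Fin (d v)` fibrewise over the maps `α → β` they induce. -/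
theorem card_fibres_mul_prod_factorial (d : β → ℕ) :
    Fintype.card {x : α → β // ∀ v, #{i | x i = v} = d v} * ∏ v, (d v)! =
      if ∑ v, d v = Fintype.card α then (Fintype.card α)! else 0 := by
  have card_over (x : α → β) :
      Fintype.card {e : α ≃ Σ v, Fin (d v) // ∀ i, (e i).1 = x i} =
        if ∀ v, #{i | x i = v} = d v then ∏ v, (d v)! else 0 := by
    simp only [Fintype.card_congr (Equiv.sigmaOverEquivPiFiber _ x), Fintype.card_pi,
      Fintype.card_equiv_eq_ite, Fintype.card_subtype, Fintype.card_fin, Fintype.prod_ite_zero]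
    split_ifs with h
    · exact prod_congr rfl fun v _ => by rw [h v]
    · rfl
  calc Fintype.card {x : α → β // ∀ v, #{i | x i = v} = d v} * ∏ v, (d v)!
      = ∑ x : α → β, Fintype.card {e : α ≃ Σ v, Fin (d v) // ∀ i, (e i).1 = x i} := by
        simp only [card_over, ← sum_filter, sum_const, smul_eq_mul, Fintype.card_subtype]
    _ = Fintype.card (α ≃ Σ v, Fin (d v)) := by
        rw [← Fintype.card_sigma]
        exact Fintype.card_congr <| (Equiv.sigmaCongrRight fun x =>
          Equiv.subtypeEquivRight fun e => funext_iff.symm).trans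
            (Equiv.sigmaFiberEquiv fun (e : α ≃ Σ v, Fin (d v)) i => (e i).1)
    _ = if ∑ v, d v = Fintype.card α then (Fintype.card α)! else 0 := by
        simp only [Fintype.card_equiv_eq_ite, Fintype.card_sigma, Fintype.card_fin, eq_comm]

end FibreCounting

section DegreeSequences

variable {N m : ℕ}

theorem card_seqDeg_mul_prod_factorial (e : Fin N → ℕ) :
    Nat.card {x : Fin m → Fin N // ∀ j, seqDeg x j = e j} * ∏ j, (e j)! =
      if ∑ j, e j = m then m ! else 0 := by
  have h := card_fibres_mul_prod_factorial (α := Fin m) e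
  rw [Fintype.card_fin] at h
  rw [Nat.card_eq_fintype_card]
  convert h; rfl

theorem card_allowed_seqDeg_mul_prod_factorial (A : Fin N → ℕ → Prop)
    [∀ j, DecidablePred (A j)] (e : Fin N → ℕ) :
    Nat.card {x : Fin m → Fin N // (∀ j, A j (seqDeg x j)) ∧ ∀ j, seqDeg x j = e j} *
        ∏ j, (e j)! =
      if (∀ j, A j (e j)) ∧ ∑ j, e j = m then m ! else 0 := by
  by_cases hA : ∀ j, A j (e j)
  · have : {x : Fin m → Fin N // (∀ j, A j (seqDeg x j)) ∧ ∀ j, seqDeg x j = e j} ≃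
        {x : Fin m → Fin N // ∀ j, seqDeg x j = e j} :=
      Equiv.subtypeEquivRight fun x => ⟨And.right, fun h => ⟨fun j => h j ▸ hA j, h⟩⟩
    simp only [Nat.card_congr this, card_seqDeg_mul_prod_factorial, hA, true_and, implies_true]
  · have : IsEmpty {x : Fin m → Fin N // (∀ j, A j (seqDeg x j)) ∧ ∀ j, seqDeg x j = e j} :=
      ⟨fun ⟨x, hx, hxe⟩ => hA fun j => hxe j ▸ hx j⟩
    simp [hA]

theorem sum_seqDeg (x : Fin m → Fin N) : ∑ j, seqDeg x j = m := by
  unfold seqDeg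
  rw [← card_eq_sum_card_fiberwise fun i _ => mem_coe.2 (mem_univ (x i)), Finset.card_univ,
    Fintype.card_fin]

end DegreeSequences

section ConditionedPoisson

variable {N m : ℕ} (A : Fin N → ℕ → Prop) [∀ j, DecidablePred (A j)] {lam : ℝ}
  {c : Fin N → ℝ} {p : Fin N → ℕ → ℝ}

theorem prod_eq_of_eq_mul_poisson (hp : ∀ j t, p j t = c j * if A j t then lam ^ t / t ! else 0)
    (e : Fin N → ℕ) :
    ∏ j, p j (e j) =
      (∏ j, c j) * if ∀ j, A j (e j) then lam ^ (∑ j, e j) / ∏ j, ((e j)! : ℝ) else 0 := by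
  simp only [hp, prod_mul_distrib, Fintype.prod_ite_zero, prod_div_distrib, prod_pow_eq_pow_sum]

theorem card_allowed_seqDeg_eq_mul (hlam : lam ≠ 0) (hc : ∀ j, c j ≠ 0)
    (hp : ∀ j t, p j t = c j * if A j t then lam ^ t / t ! else 0) (e : Fin N → ℕ) :
    (Nat.card {x : Fin m → Fin N // (∀ j, A j (seqDeg x j)) ∧ ∀ j, seqDeg x j = e j} : ℝ) =
      m ! / (lam ^ m * ∏ j, c j) * if ∑ j, e j = m then ∏ j, p j (e j) else 0 := by
  have hfac : (∏ j, ((e j)! : ℝ)) ≠ 0 := prod_ne_zero_iff.2 fun j _ => by positivity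
  have hC : ∏ j, c j ≠ 0 := prod_ne_zero_iff.2 fun j _ => hc j
  rw [← mul_left_inj' hfac, ← Nat.cast_prod, ← Nat.cast_mul,
    card_allowed_seqDeg_mul_prod_factorial, prod_eq_of_eq_mul_poisson A hp]
  by_cases hs : ∑ j, e j = m
  · by_cases hA : ∀ j, A j (e j)
    · simp only [hs, hA, implies_true, and_self, if_true, Nat.cast_prod]
      field_simp
    · simp [hA]
  · simp [hs]

theorem card_seqDeg_div_card_eq_conditioned (hlam : lam ≠ 0) (hc : ∀ j, c j ≠ 0)
    (hp : ∀ j t, p j t = c j * if A j t then lam ^ t / t ! else 0) (d : Fin N → ℕ) :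
    (Nat.card {x : Fin m → Fin N // (∀ j, A j (seqDeg x j)) ∧ ∀ j, seqDeg x j = d j} : ℝ) /
        Nat.card {x : Fin m → Fin N // ∀ j, A j (seqDeg x j)} =
      (if ∑ j, d j = m then ∏ j, p j (d j) else 0) /
        ∑' e : Fin N → ℕ, if ∑ j, e j = m then ∏ j, p j (e j) else 0 := by
  set s : Finset (Fin N → ℕ) := piAntidiag univ m
  have hK : (m ! : ℝ) / (lam ^ m * ∏ j, c j) ≠ 0 := by
    have := prod_ne_zero_iff.2 fun j (_ : j ∈ univ) => hc j
    positivity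
  have hcard : Nat.card {x : Fin m → Fin N // ∀ j, A j (seqDeg x j)} =
      ∑ e ∈ s, Nat.card {x : Fin m → Fin N // (∀ j, A j (seqDeg x j)) ∧ ∀ j, seqDeg x j = e j} := by
    rw [Nat.card_eq_fintype_card, Fintype.card_subtype,
      card_eq_sum_card_fiberwise (f := fun x => seqDeg x) (t := s) fun x _ => by
        simp [s, sum_seqDeg]]
    simp only [Nat.card_eq_fintype_card, Fintype.card_subtype, filter_filter, funext_iff]
  have htsum : (∑' e : Fin N → ℕ, if ∑ j, e j = m then ∏ j, p j (e j) else 0) =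
      ∑ e ∈ s, if ∑ j, e j = m then ∏ j, p j (e j) else 0 :=
    tsum_eq_sum fun e he => if_neg fun hs => he (by simp [s, hs])
  rw [htsum, hcard, Nat.cast_sum]
  simp only [card_allowed_seqDeg_eq_mul A hlam hc hp]
  rw [← mul_sum, mul_div_mul_left _ _ hK]

end ConditionedPoisson

theorem truncF_pos (k : ℕ) {lam : ℝ} (hlam : 0 < lam) : 0 < truncF k lam := by
  have h := Real.sum_le_exp_of_nonneg hlam.le (k + 1)
  rw [sum_range_succ] at h
  have : 0 < lam ^ k / (k ! : ℝ) := by positivity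
  unfold truncF
  linarith

section DegreeModel

variable {N : ℕ} (J₂ J₃ : Finset (Fin N)) (d₀ : Fin N → ℕ)

def IsAllowedDeg (j : Fin N) (t : ℕ) : Prop :=
  if j ∈ J₂ then 2 ≤ t else if j ∈ J₃ then 3 ≤ t else t = d₀ j

instance (j : Fin N) : DecidablePred (IsAllowedDeg J₂ J₃ d₀ j) := fun t => by
  unfold IsAllowedDeg; infer_instance

theorem forall_isAllowedDeg_iff (hdisj : Disjoint J₂ J₃) (e : Fin N → ℕ) :
    (∀ j, IsAllowedDeg J₂ J₃ d₀ j (e j)) ↔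
      (∀ j ∈ J₂, 2 ≤ e j) ∧ (∀ j ∈ J₃, 3 ≤ e j) ∧ ∀ j ∈ (J₂ ∪ J₃)ᶜ, e j = d₀ j := by
  constructor
  · intro h
    refine ⟨fun j hj => ?_, fun j hj => ?_, fun j hj => ?_⟩
    · simpa [IsAllowedDeg, hj] using h j
    · simpa [IsAllowedDeg, hj, disjoint_right.mp hdisj hj] using h j
    · simp only [mem_compl, mem_union, not_or] at hj
      simpa [IsAllowedDeg, hj] using h j
  · rintro ⟨h₂, h₃, h₀⟩ j
    unfold IsAllowedDeg
    split_ifs with hj₂ hj₃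
    exacts [h₂ j hj₂, h₃ j hj₃, h₀ j (by simp [hj₂, hj₃])]

noncomputable def pmfZFactor (lam : ℝ) (j : Fin N) : ℝ :=
  if j ∈ J₂ then (truncF 2 lam)⁻¹ else if j ∈ J₃ then (truncF 3 lam)⁻¹ else (d₀ j)! / lam ^ d₀ j

theorem pmfZFactor_ne_zero {lam : ℝ} (hlam : 0 < lam) (j : Fin N) :
    pmfZFactor J₂ J₃ d₀ lam j ≠ 0 := by
  have := truncF_pos 2 hlam
  have := truncF_pos 3 hlam
  unfold pmfZFactor
  split_ifs <;> positivity

theorem pmfZ_eq_pmfZFactor_mul {lam : ℝ} (hlam : lam ≠ 0) (j : Fin N) (t : ℕ) :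
    pmfZ J₂ J₃ d₀ lam j t =
      pmfZFactor J₂ J₃ d₀ lam j * if IsAllowedDeg J₂ J₃ d₀ j t then lam ^ t / t ! else 0 := by
  unfold pmfZ pmfZFactor IsAllowedDeg truncPoissonPMF
  split_ifs <;> first | ring1 | (subst_vars; field_simp)

end DegreeModel

theorem stmt_5_general (N M : ℕ) (J₂ J₃ : Finset (Fin N)) (hdisj : Disjoint J₂ J₃)
    (d₀ : Fin N → ℕ) (lam : ℝ) (hlam : 0 < lam) :
    ∀ d : Fin N → ℕ,
      (Nat.card {x : Fin (2 * M) → Fin N //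
            ((∀ j ∈ J₂, 2 ≤ seqDeg x j) ∧ (∀ j ∈ J₃, 3 ≤ seqDeg x j) ∧
              ∀ j ∈ (J₂ ∪ J₃)ᶜ, seqDeg x j = d₀ j) ∧ ∀ j, seqDeg x j = d j} : ℝ) /
          (Nat.card {x : Fin (2 * M) → Fin N //
            (∀ j ∈ J₂, 2 ≤ seqDeg x j) ∧ (∀ j ∈ J₃, 3 ≤ seqDeg x j) ∧
              ∀ j ∈ (J₂ ∪ J₃)ᶜ, seqDeg x j = d₀ j} : ℝ)
        = (if ∑ j, d j = 2 * M then ∏ j, pmfZ J₂ J₃ d₀ lam j (d j) else 0) /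
            ∑' d' : Fin N → ℕ,
              (if ∑ j, d' j = 2 * M then ∏ j, pmfZ J₂ J₃ d₀ lam j (d' j) else 0) := by
  intro d
  simp only [← forall_isAllowedDeg_iff J₂ J₃ d₀ hdisj]
  exact card_seqDeg_div_card_eq_conditioned _ hlam.ne' (pmfZFactor_ne_zero J₂ J₃ d₀ hlam)
    (pmfZ_eq_pmfZFactor_mul J₂ J₃ d₀ hlam.ne') d

/-- The degree sequence of a uniform `x ∈ [N]^{2M}` conditioned on `d_x(j) ≥ i` for `j ∈ Jᵢ`
(`i = 2,3`) and `d_x(j) = d_j` on `J₀`, is distributed as independent truncated Poissons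
(constants on `J₀`) conditioned on their sum being `2M`: the two joint probability mass
functions agree at every candidate degree sequence `d`. -/
theorem stmt_5 (N M : ℕ) (J₂ J₃ : Finset (Fin N)) (hdisj : Disjoint J₂ J₃)
    (d₀ : Fin N → ℕ) (lam : ℝ) (hlam : 0 < lam)
    (heq : (lam * truncF 1 lam / truncF 2 lam) * J₂.card
        + (lam * truncF 2 lam / truncF 3 lam) * J₃.card
      = 2 * M - ∑ j ∈ (J₂ ∪ J₃)ᶜ, (d₀ j : ℝ)) :
    ∀ d : Fin N → ℕ,
      (Nat.card {x : Fin (2 * M) → Fin N //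
            ((∀ j ∈ J₂, 2 ≤ seqDeg x j) ∧ (∀ j ∈ J₃, 3 ≤ seqDeg x j) ∧
              ∀ j ∈ (J₂ ∪ J₃)ᶜ, seqDeg x j = d₀ j) ∧ ∀ j, seqDeg x j = d j} : ℝ) /
          (Nat.card {x : Fin (2 * M) → Fin N //
            (∀ j ∈ J₂, 2 ≤ seqDeg x j) ∧ (∀ j ∈ J₃, 3 ≤ seqDeg x j) ∧
              ∀ j ∈ (J₂ ∪ J₃)ᶜ, seqDeg x j = d₀ j} : ℝ)
        = (if ∑ j, d j = 2 * M then ∏ j, pmfZ J₂ J₃ d₀ lam j (d j) else 0) /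
            ∑' d' : Fin N → ℕ,
              (if ∑ j, d' j = 2 * M then ∏ j, pmfZ J₂ J₃ d₀ lam j (d' j) else 0) :=
  stmt_5_general N M J₂ J₃ hdisj d₀ lam hlam
end

section
/- There is a constant C > 0 such that for every λ > 0 and every ℓ ∈ {2, 3}, the variance σ_ℓ² = [ f_ℓ(λ)(λ² f_{ℓ−2}(λ) + λ f_{ℓ−1}(λ)) − λ² f_{ℓ−1}(λ)² ] / f_ℓ(λ)² of a truncated Poisson random variable with parameter λ truncated at ℓ satisfies σ_ℓ² ≤ C λ. -/
open scoped BigOperators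

/-- The variance of a truncated Poisson random variable with parameter `lam`
truncated at `ℓ`, as a formula in `lam` and `ℓ`. -/
noncomputable def truncPoissonVar (lam : ℝ) (ℓ : ℕ) : ℝ :=
  (truncF ℓ lam * (lam ^ 2 * truncF (ℓ - 2) lam + lam * truncF (ℓ - 1) lam)
    - lam ^ 2 * (truncF (ℓ - 1) lam) ^ 2) / (truncF ℓ lam) ^ 2

/-!
`f_ℓ(λ) = ∑_{j ≥ ℓ} λ^j / j!` is the tail of the exponential series. Using
`f_{ℓ-2} = f_{ℓ-1} + λ^{ℓ-2}/(ℓ-2)!` and `f_{ℓ-1} = f_ℓ + λ^{ℓ-1}/(ℓ-1)!`, the gap between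
`λ f_ℓ²` and the numerator of `σ_ℓ²` factors as `λ · λ^{ℓ-1}/(ℓ-1)! · (λ f_{ℓ-1} - ℓ f_ℓ)`.
The last factor is a series with nonnegative terms `(j - ℓ) λ^j / j!` for `j ≥ ℓ`, so
`σ_ℓ² ≤ λ` for every `ℓ ≥ 2`, and `C = 1` works.
-/

open scoped Nat

lemma truncF_succ (k : ℕ) (x : ℝ) : truncF (k + 1) x = truncF k x - x ^ k / k ! := by
  simp only [truncF, Finset.sum_range_succ]
  ring

lemma hasSum_truncF (k : ℕ) (x : ℝ) :
    HasSum (fun i ↦ x ^ (i + k) / (i + k)!) (truncF k x) := by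
  rw [truncF, Real.exp_eq_exp_ℝ]
  exact (hasSum_nat_add_iff' k).mpr (NormedSpace.expSeries_div_hasSum_exp x)

lemma truncF_pos_s15 {x : ℝ} (hx : 0 < x) (k : ℕ) : 0 < truncF k x :=
  hasSum_lt (i := 0) (fun i ↦ by positivity) (by positivity) hasSum_zero (hasSum_truncF k x)

lemma succ_mul_truncF_succ_le {x : ℝ} (hx : 0 ≤ x) (n : ℕ) :
    (n + 1) * truncF (n + 1) x ≤ x * truncF n x := by
  refine hasSum_le (fun i ↦ ?_) ((hasSum_truncF (n + 1) x).mul_left _)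
    ((hasSum_truncF n x).mul_left x)
  have hfac : ((i + (n + 1))! : ℝ) = (i + n + 1) * (i + n)! := by
    rw [← add_assoc, Nat.factorial_succ]; push_cast; ring
  rw [hfac, ← add_assoc, pow_succ',
    show (n + 1 : ℝ) * (x * x ^ (i + n) / ((i + n + 1) * (i + n)!))
      = (n + 1) / (i + n + 1) * (x * (x ^ (i + n) / (i + n)!)) by field_simp]
  exact mul_le_of_le_one_left (by positivity) (div_le_one_of_le₀ (by linarith) (by positivity))

theorem truncPoissonVar_le_self {x : ℝ} (hx : 0 < x) {ℓ : ℕ} (hℓ : 2 ≤ ℓ) :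
    truncPoissonVar x ℓ ≤ x := by
  obtain ⟨n, rfl⟩ := Nat.exists_eq_add_of_le' hℓ
  have hb := truncF_succ n x
  have hc := truncF_succ (n + 1) x
  have hkey := succ_mul_truncF_succ_le hx.le (n + 1)
  have hc_pos := truncF_pos_s15 hx (n + 2)
  simp only [truncPoissonVar, show n + 2 - 2 = n by omega, show n + 2 - 1 = n + 1 by omega]
  set a := truncF n x
  set b := truncF (n + 1) x
  set c := truncF (n + 2) x
  set t := x ^ n / (n)!
  set d := x ^ (n + 1) / (n + 1)!
  have hd : x * t = (n + 1) * d := by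
    simp only [t, d, Nat.factorial_succ, pow_succ]; push_cast; field_simp
  have hgap : x * c ^ 2 - (c * (x ^ 2 * a + x * b) - x ^ 2 * b ^ 2)
      = x * d * (x * b - (n + 2) * c) := by
    linear_combination c * x ^ 2 * hb - c * x * hd + x * (c - x * b) * hc
  have hkey' : (n + 2) * c ≤ x * b := by push_cast at hkey; linarith
  rw [div_le_iff₀ (by positivity)]
  linarith [mul_nonneg (mul_nonneg hx.le (by positivity : 0 ≤ d)) (sub_nonneg.mpr hkey')]

/-- There is a universal constant `C > 0` with `σ_ℓ² ≤ C·lam` for all `lam > 0` and `ℓ ∈ {2,3}`. -/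
theorem stmt_15 :
    ∃ C : ℝ, 0 < C ∧ ∀ lam : ℝ, 0 < lam → ∀ ℓ ∈ ({2, 3} : Set ℕ),
      truncPoissonVar lam ℓ ≤ C * lam := by
  refine ⟨1, one_pos, fun lam hlam ℓ hℓ ↦ ?_⟩
  have hℓ2 : 2 ≤ ℓ := by rcases hℓ with rfl | rfl <;> norm_num
  simpa using truncPoissonVar_le_self hlam hℓ2
end
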